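/- Fix β > 1. There exists a constant M(β) > 0 such that for all n ∈ ℕ with n ≥ 1 and all x ≥ 0, (1/(1+x²)) · W_n^{(β)}(1+t²; x) ≤ M(β), where W_n^{(β)} is the Wright operator. -/
import Mathlib
set_option maxHeartbeats 1000000

noncomputable def wright (β z : ℝ) : ℝ :=
  ∑' k : ℕ, z ^ k / (k.factorial * Real.Gamma ((k : ℝ) + β))

noncomputable def W (β : ℝ) (n : ℕ) (f : ℝ → ℝ) (x : ℝ) : ℝ :=
  (wright β (n * x))⁻¹ *
    ∑' k : ℕ, f (((k : ℝ) + β) / n) * (n * x) ^ k / (k.factorial * Real.Gamma ((k : ℝ) + β))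

lemma gamma_ge (β : ℝ) (hβ : 1 ≤ β) (k : ℕ) : Real.Gamma β ≤ Real.Gamma ((k : ℝ) + β) := by
  induction k with
  | zero => simp
  | succ k ih =>
    have h1 : (0:ℝ) < (k:ℝ) + β := by positivity
    have h2 : Real.Gamma (((k:ℕ)+1 : ℕ) + β) = ((k:ℝ) + β) * Real.Gamma ((k:ℝ) + β) := by
      push_cast
      rw [show ((k:ℝ)+1+β) = ((k:ℝ)+β)+1 by ring, Real.Gamma_add_one h1.ne']
    have h3 : 0 < Real.Gamma ((k:ℝ)+β) := Real.Gamma_pos_of_pos h1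
    calc Real.Gamma β ≤ Real.Gamma ((k:ℝ)+β) := ih
    _ ≤ ((k:ℝ)+β) * Real.Gamma ((k:ℝ)+β) := by nlinarith
    _ = _ := h2.symm

lemma summable_a (β z : ℝ) (hβ : 1 ≤ β) (hz : 0 ≤ z) :
    Summable (fun k : ℕ => z ^ k / (k.factorial * Real.Gamma ((k:ℝ) + β))) := by
  have hΓβ : 0 < Real.Gamma β := Real.Gamma_pos_of_pos (by linarith)
  refine Summable.of_nonneg_of_le (fun k => ?_) (fun k => ?_)
    ((Real.summable_pow_div_factorial z).mul_left (Real.Gamma β)⁻¹)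
  · have := Real.Gamma_pos_of_pos (show (0:ℝ) < (k:ℝ)+β by positivity)
    positivity
  · have hG : Real.Gamma β ≤ Real.Gamma ((k:ℝ)+β) := gamma_ge β hβ k
    have hf : (0:ℝ) < (k.factorial : ℝ) := by positivity
    rw [show (k.factorial : ℝ) * Real.Gamma ((k:ℝ)+β) = Real.Gamma ((k:ℝ)+β) * k.factorial
      from mul_comm _ _, ← div_div, inv_mul_eq_div, div_right_comm]
    exact div_le_div_of_nonneg_left (by positivity) hΓβ hG

lemma wright_pos (β z : ℝ) (hβ : 1 ≤ β) (hz : 0 ≤ z) : 0 < wright β z := by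
  refine Summable.tsum_pos (summable_a β z hβ hz) (fun k => ?_) 0 ?_
  · have := Real.Gamma_pos_of_pos (show (0:ℝ) < (k:ℝ)+β by positivity)
    positivity
  · have := Real.Gamma_pos_of_pos (show (0:ℝ) < β by linarith)
    simp only [pow_zero, Nat.factorial_zero, Nat.cast_zero, Nat.cast_one, zero_add, one_mul]
    positivity

lemma wright_succ_le (β z : ℝ) (hβ : 1 ≤ β) (hz : 0 ≤ z) : wright (β+1) z ≤ wright β z := by
  refine Summable.tsum_le_tsum (fun k => ?_) (summable_a (β+1) z (by linarith) hz) (summable_a β z hβ hz)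
  have h1 : (0:ℝ) < (k:ℝ) + β := by positivity
  have hΓ : 0 < Real.Gamma ((k:ℝ) + β) := Real.Gamma_pos_of_pos h1
  have h2 : Real.Gamma ((k:ℝ) + (β+1)) = ((k:ℝ)+β) * Real.Gamma ((k:ℝ)+β) := by
    rw [show ((k:ℝ)+(β+1)) = ((k:ℝ)+β)+1 by ring, Real.Gamma_add_one h1.ne']
  have hf : (0:ℝ) < (k.factorial : ℝ) := by positivity
  apply div_le_div_of_nonneg_left (by positivity) (by positivity)
  rw [h2]
  have hk : (0:ℝ) ≤ (k:ℝ) := Nat.cast_nonneg k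
  nlinarith [mul_pos hf hΓ]

theorem stmt_12 (β : ℝ) (hβ : 1 < β) :
    ∃ M > 0, ∀ n : ℕ, 1 ≤ n → ∀ x : ℝ, 0 ≤ x →
      (1 + x ^ 2)⁻¹ * W β n (fun t => 1 + t ^ 2) x ≤ M := by
  have hβ1 : (1:ℝ) ≤ β := hβ.le
  refine ⟨β^2 + 2*β + 3, by nlinarith, fun n hn x hx => ?_⟩
  have hn' : (1:ℝ) ≤ (n:ℝ) := by exact_mod_cast hn
  have hn0 : (n:ℝ) ≠ 0 := by linarith
  unfold W
  set z : ℝ := (n:ℝ) * x with hzdef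
  have hz : 0 ≤ z := by positivity
  have hSa : Summable (fun k : ℕ => z ^ k / (k.factorial * Real.Gamma ((k:ℝ) + β))) :=
    summable_a β z hβ1 hz
  have hSa1 := summable_a (β+1) z (by linarith) hz
  have hSa2 := summable_a (β+2) z (by linarith) hz
  set a : ℕ → ℝ := fun k => z ^ k / (k.factorial * Real.Gamma ((k:ℝ) + β)) with hadef
  set g : ℕ → ℝ := fun k => (k:ℝ) * a k with hgdef
  set h : ℕ → ℝ := fun k => (k:ℝ) * ((k:ℝ)-1) * a k with hhdef
  have hgshift : ∀ k : ℕ, g (k+1) = z * (z ^ k / (k.factorial * Real.Gamma ((k:ℝ) + (β+1)))) := by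
    intro k
    have h1 : (0:ℝ) < (k:ℝ) + (β+1) := by positivity
    have hΓ : Real.Gamma ((k:ℝ)+(β+1)) ≠ 0 := (Real.Gamma_pos_of_pos h1).ne'
    have hf : ((k.factorial:ℝ)) ≠ 0 := by positivity
    have hk1 : ((k:ℝ)+1) ≠ 0 := by positivity
    simp only [hgdef, hadef]
    push_cast [Nat.factorial_succ]
    rw [show ((k:ℝ)+1+β) = (k:ℝ)+(β+1) by ring]
    field_simp
    ring
  have hhshift : ∀ k : ℕ,
      h (k+2) = z^2 * (z ^ k / (k.factorial * Real.Gamma ((k:ℝ) + (β+2)))) := by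
    intro k
    have h1 : (0:ℝ) < (k:ℝ) + (β+2) := by positivity
    have hΓ : Real.Gamma ((k:ℝ)+(β+2)) ≠ 0 := (Real.Gamma_pos_of_pos h1).ne'
    have hf : ((k.factorial:ℝ)) ≠ 0 := by positivity
    have hk1 : ((k:ℝ)+1) ≠ 0 := by positivity
    have hk2 : ((k:ℝ)+2) ≠ 0 := by positivity
    simp only [hhdef, hadef]
    push_cast [Nat.factorial_succ]
    rw [show ((k:ℝ)+2+β) = (k:ℝ)+(β+2) by ring]
    field_simp
    ring
  have hSg : Summable g := by
    rw [← summable_nat_add_iff 1]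
    exact (funext hgshift : (fun k => g (k+1)) = _) ▸ hSa1.mul_left z
  have hSh : Summable h := by
    rw [← summable_nat_add_iff 2]
    exact (funext hhshift : (fun k => h (k+2)) = _) ▸ hSa2.mul_left (z^2)
  have hg0 : g 0 = 0 := by simp [hgdef]
  have hh0 : h 0 = 0 := by simp [hhdef]
  have hh1 : h 1 = 0 := by simp [hhdef]
  have hG : ∑' k, g k = z * wright (β+1) z := by
    rw [Summable.tsum_eq_zero_add hSg, hg0, zero_add, tsum_congr hgshift, tsum_mul_left]
    rfl
  have hH : ∑' k, h k = z^2 * wright (β+2) z := by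
    have hSh1 : Summable (fun k => h (k+1)) := (summable_nat_add_iff 1).mpr hSh
    rw [Summable.tsum_eq_zero_add hSh, hh0, zero_add, Summable.tsum_eq_zero_add hSh1, hh1, zero_add,
      tsum_congr hhshift, tsum_mul_left]
    rfl
  set Aw : ℝ := wright β z with hAwdef
  have hA : 0 < Aw := wright_pos β z hβ1 hz
  have hGle : ∑' k, g k ≤ z * Aw := by
    rw [hG]
    exact mul_le_mul_of_nonneg_left (wright_succ_le β z hβ1 hz) hz
  have hHle : ∑' k, h k ≤ z^2 * Aw := by
    rw [hH]
    have h21 : wright (β+1+1) z ≤ wright (β+1) z := wright_succ_le (β+1) z (by linarith) hz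
    rw [show β+1+1 = β+2 by ring] at h21
    exact mul_le_mul_of_nonneg_left (h21.trans (wright_succ_le β z hβ1 hz)) (by positivity)
  have hT : ∀ k : ℕ, (1 + (((k:ℝ)+β)/(n:ℝ))^2) * z^k / (k.factorial * Real.Gamma ((k:ℝ)+β))
      = a k + ((n:ℝ)^2)⁻¹ * (h k + (2*β+1) * g k + β^2 * a k) := by
    intro k
    simp only [hgdef, hhdef, hadef]
    ring
  have hAsum : ∑' k, a k = Aw := rfl
  have hsum : (∑' k : ℕ, (1 + (((k:ℝ)+β)/(n:ℝ))^2) * z^k / (k.factorial * Real.Gamma ((k:ℝ)+β)))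
      = Aw + ((n:ℝ)^2)⁻¹ * ((∑' k, h k) + (2*β+1) * (∑' k, g k) + β^2 * Aw) := by
    rw [tsum_congr hT,
      Summable.tsum_add hSa (((hSh.add (hSg.mul_left _)).add (hSa.mul_left _)).mul_left _), hAsum,
      tsum_mul_left, Summable.tsum_add (hSh.add (hSg.mul_left _)) (hSa.mul_left _),
      Summable.tsum_add hSh (hSg.mul_left _), tsum_mul_left, tsum_mul_left, hAsum]
  simp only []
  rw [hsum]
  set u : ℝ := ((n:ℝ)^2)⁻¹ with hudef
  have hu : 0 ≤ u := by positivity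
  have hu1 : u ≤ 1 := by
    rw [hudef]
    rw [inv_le_one_iff₀]
    right; nlinarith
  have huz2 : u * z^2 = x^2 := by
    rw [hudef, hzdef]
    field_simp
  have huz : u * z ≤ x := by
    rw [hudef, hzdef]
    rw [show ((n:ℝ)^2)⁻¹ * ((n:ℝ)*x) = x / n by field_simp]
    rw [div_le_iff₀ (by linarith)]
    nlinarith
  have hx2 : (0:ℝ) < 1 + x^2 := by positivity
  rw [inv_mul_le_iff₀ hx2, inv_mul_le_iff₀ hA]
  set H : ℝ := ∑' k, h k
  set G : ℝ := ∑' k, g k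
  have hH2 : u * H ≤ x^2 * Aw := by
    calc u * H ≤ u * (z^2 * Aw) := mul_le_mul_of_nonneg_left hHle hu
    _ = (u * z^2) * Aw := by ring
    _ = x^2 * Aw := by rw [huz2]
  have hG2 : u * G ≤ x * Aw := by
    calc u * G ≤ u * (z * Aw) := mul_le_mul_of_nonneg_left hGle hu
    _ = (u * z) * Aw := by ring
    _ ≤ x * Aw := mul_le_mul_of_nonneg_right huz hA.le
  have hA2 : u * Aw ≤ Aw := by
    calc u * Aw ≤ 1 * Aw := mul_le_mul_of_nonneg_right hu1 hA.le
    _ = Aw := one_mul _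
  have key : 1 + x^2 + (2*β+1)*x + β^2 ≤ (1+x^2)*(β^2+2*β+3) := by
    nlinarith [sq_nonneg (x-1), sq_nonneg x]
  calc Aw + u * (H + (2*β+1) * G + β^2 * Aw)
      = Aw + u * H + (2*β+1) * (u * G) + β^2 * (u * Aw) := by ring
    _ ≤ Aw + x^2 * Aw + (2*β+1) * (x * Aw) + β^2 * Aw := by
        have t1 := mul_le_mul_of_nonneg_left hG2 (show (0:ℝ) ≤ 2*β+1 by linarith)
        have t2 := mul_le_mul_of_nonneg_left hA2 (show (0:ℝ) ≤ β^2 by positivity)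
        linarith
    _ = Aw * (1 + x^2 + (2*β+1)*x + β^2) := by ring
    _ ≤ Aw * ((1+x^2)*(β^2+2*β+3)) := mul_le_mul_of_nonneg_left key hA.le
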